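/- Let G be a compact-bumpy setting: G ample with Hausdorff unit space, S ⊆ A compact-Z-bumpy, and suppose G is effective (int(G^iso) = G⁰). Then M, the set of elements of A that are C-Z-dominated by elements of S, equals {a ∈ A : dom(a) ⊆ B for some compact bisection B}. -/

import Mathlib

/-- A groupoid modelled as a set with a partially defined (Option-valued)
multiplication and an involution. -/
structure Gpd (G : Type*) where
  mul : G → G → Option G
  inv : G → G
  inv_inv : ∀ g, inv (inv g) = g
  inv_mul_isSome : ∀ g, (mul (inv g) g).isSome
  defined_iff : ∀ g h, (mul g h).isSome ↔ mul (inv g) g = mul h (inv h)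
  massoc : ∀ {g h k gh hk}, mul g h = some gh → mul h k = some hk →
      mul gh k = mul g hk
  inv_mul_cancel : ∀ {g h gh}, mul g h = some gh → mul (inv g) gh = some h
  mul_inv_cancel : ∀ {g h gh}, mul g h = some gh → mul gh (inv h) = some g
  mul_src : ∀ {g u}, mul (inv g) g = some u → mul g u = some g
  rng_mul : ∀ {g u}, mul g (inv g) = some u → mul u g = some g

namespace Gpd

variable {G Y : Type*} (𝒢 : Gpd G)

/-- The source `s(g) = g⁻¹g`. -/
def src (g : G) : G := (𝒢.mul (𝒢.inv g) g).getD g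

/-- The range `r(g) = gg⁻¹`. -/
def rng (g : G) : G := (𝒢.mul g (𝒢.inv g)).getD g

/-- The unit space `G⁰`. -/
def unitSpace : Set G := Set.range 𝒢.src

/-- The isotropy `G^iso`. -/
def iso : Set G := {g | 𝒢.src g = 𝒢.rng g}

/-- Bisections. -/
def IsBisection (B : Set G) : Prop :=
  ∀ g ∈ B, ∀ h ∈ B, (𝒢.src g = 𝒢.src h ∨ 𝒢.rng g = 𝒢.rng h) → g = h

/-- Isosections. -/
def IsIsosection (I : Set G) : Prop :=
  ∀ g ∈ I, ∀ h ∈ I, (𝒢.src g = 𝒢.src h ↔ 𝒢.rng g = 𝒢.rng h)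

/-- Product of subsets. -/
def setMul (A B : Set G) : Set G := {x | ∃ g ∈ A, ∃ h ∈ B, 𝒢.mul g h = some x}

/-- Inverse of a subset. -/
def setInv (A : Set G) : Set G := 𝒢.inv '' A

end Gpd

/-- The domain of a `Y`-valued partial function on `G`. -/
def pdom {G Y : Type*} (a : G → Option Y) : Set G := {g | (a g).isSome}

open Classical in
/-- The product of partial functions, `ab(gh) = a(g)b(h)` on factorizations
(well-defined when a domain is a bisection; defined by choice in general). -/
noncomputable def Gpd.convProd {G Y : Type*} [Mul Y] (𝒢 : Gpd G)
    (a b : G → Option Y) : G → Option Y := fun x =>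
  if h : ∃ p : Y × Y, ∃ g k : G, a g = some p.1 ∧ b k = some p.2 ∧ 𝒢.mul g k = some x
  then some (h.choose.1 * h.choose.2) else none

/-- The set `[Y^×]a` where the function takes invertible values. -/
def unitsPre {G Y : Type*} [Monoid Y] (a : G → Option Y) : Set G :=
  {g | ∃ y, a g = some y ∧ IsUnit y}

/-- The set `[1]a` where the function takes the value `1`. -/
def onePre {G Y : Type*} [Monoid Y] (a : G → Option Y) : Set G :=
  {g | a g = some (1 : Y)}

/-- A unital semigroup is `1`-cancellative if `xy = x ↔ y = 1 ↔ yx = x`. -/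
def OneCancellative (Y : Type*) [Monoid Y] : Prop :=
  ∀ x y : Y, (x * y = x ↔ y = 1) ∧ (y * x = x ↔ y = 1)

/-- The domination relation `a ≺_s b` relative to a diagonal `D`. -/
def precS {α : Type*} (m : α → α → α) (D : Set α) (a s b : α) : Prop :=
  m (m a s) b = a ∧ m (m b s) a = a ∧ m a s ∈ D ∧ m s a ∈ D

/-- Étale: inversion and multiplication continuous, source a local homeomorphism. -/
def Gpd.Etale {G : Type*} [TopologicalSpace G] (𝒢 : Gpd G) : Prop :=
  Continuous 𝒢.inv ∧
  Continuous (fun p : {p : G × G // (𝒢.mul p.1 p.2).isSome} =>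
    (𝒢.mul p.val.1 p.val.2).get p.property) ∧
  IsLocalHomeomorph 𝒢.src

/-- Ample: étale with a basis of compact open bisections. -/
def Gpd.Ample {G : Type*} [TopologicalSpace G] (𝒢 : Gpd G) : Prop :=
  𝒢.Etale ∧ TopologicalSpace.IsTopologicalBasis
    {O : Set G | IsCompact O ∧ IsOpen O ∧ 𝒢.IsBisection O}

/-- Bumpy semigroups of `Y`-valued functions on open bisections. -/
structure Gpd.IsBumpy {G Y : Type*} [TopologicalSpace G] [Monoid Y] (𝒢 : Gpd G)
    (S : Set (G → Option Y)) : Prop where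
  domBisection : ∀ a ∈ S, 𝒢.IsBisection (pdom a)
  domOpen : ∀ a ∈ S, IsOpen (pdom a)
  mulClosed : ∀ a ∈ S, ∀ b ∈ S, 𝒢.convProd a b ∈ S
  oneProper : ∀ a ∈ S, IsCompact (onePre a)
  empty_mem : (fun _ => (none : Option Y)) ∈ S
  urysohn : ∀ O : Set G, IsOpen O → ∀ g ∈ O, ∃ a ∈ S,
    pdom a ⊆ O ∧ g ∈ interior (unitsPre a)
  involutive : ∀ a ∈ S, ∀ g ∈ interior (unitsPre a), ∃ b ∈ S,
    𝒢.inv g ∈ interior {h | ∃ y z, a (𝒢.inv h) = some y ∧ b h = some z ∧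
      y * z = 1 ∧ z * y = 1}

/-- Compact-bumpy semigroups. -/
structure Gpd.IsCompactBumpy {G Y : Type*} [TopologicalSpace G] [Monoid Y] (𝒢 : Gpd G)
    (S : Set (G → Option Y)) : Prop where
  bumpy : 𝒢.IsBumpy S
  compactUrysohn : ∀ C O : Set G, IsCompact C → 𝒢.IsBisection C → IsOpen O →
    𝒢.IsBisection O → C ⊆ O → ∃ a ∈ S, pdom a ⊆ O ∧ C ⊆ unitsPre a
  compactInvolutive : ∀ a ∈ S, ∀ C ⊆ unitsPre a, IsCompact C → ∃ b ∈ S,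
    ∀ g ∈ C, ∃ y z, a g = some y ∧ b (𝒢.inv g) = some z ∧ y * z = 1 ∧ z * y = 1



namespace Gpd

variable {G Y : Type*} (𝒢 : Gpd G)

lemma mul_inv_self (g : G) : 𝒢.mul (𝒢.inv g) g = some (𝒢.src g) := by
  obtain ⟨u, hu⟩ := Option.isSome_iff_exists.mp (𝒢.inv_mul_isSome g)
  simp [Gpd.src, hu]

lemma mul_self_inv (g : G) : 𝒢.mul g (𝒢.inv g) = some (𝒢.rng g) := by
  have h := 𝒢.inv_mul_isSome (𝒢.inv g)
  rw [𝒢.inv_inv] at h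
  obtain ⟨u, hu⟩ := Option.isSome_iff_exists.mp h
  simp [Gpd.rng, hu]

lemma src_eq {g u : G} (h : 𝒢.mul (𝒢.inv g) g = some u) : 𝒢.src g = u := by
  simp [Gpd.src, h]

lemma rng_eq {g u : G} (h : 𝒢.mul g (𝒢.inv g) = some u) : 𝒢.rng g = u := by
  simp [Gpd.rng, h]

lemma isSome_mul_iff (g h : G) : (𝒢.mul g h).isSome ↔ 𝒢.src g = 𝒢.rng h := by
  rw [𝒢.defined_iff, 𝒢.mul_inv_self, 𝒢.mul_self_inv, Option.some_inj]

lemma src_of_mul {g h x : G} (hx : 𝒢.mul g h = some x) : 𝒢.src x = 𝒢.src h := by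
  have h1 : 𝒢.mul x (𝒢.inv h) = some g := 𝒢.mul_inv_cancel hx
  have h2 : 𝒢.mul (𝒢.inv x) g = some (𝒢.inv h) := 𝒢.inv_mul_cancel h1
  have h3 := 𝒢.massoc h2 hx
  apply 𝒢.src_eq
  rw [← h3]
  exact 𝒢.mul_inv_self h

lemma rng_of_mul {g h x : G} (hx : 𝒢.mul g h = some x) : 𝒢.rng x = 𝒢.rng g := by
  have h1 : 𝒢.mul x (𝒢.inv h) = some g := 𝒢.mul_inv_cancel hx
  have h2 : 𝒢.mul (𝒢.inv x) g = some (𝒢.inv h) := 𝒢.inv_mul_cancel h1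
  have h4 : 𝒢.mul (𝒢.inv h) (𝒢.inv g) = some (𝒢.inv x) := 𝒢.mul_inv_cancel h2
  have h5 := 𝒢.massoc h1 h4
  apply 𝒢.rng_eq
  rw [← h5]
  exact 𝒢.mul_self_inv g

lemma src_inv (g : G) : 𝒢.src (𝒢.inv g) = 𝒢.rng g := by
  apply 𝒢.src_eq
  rw [𝒢.inv_inv]
  exact 𝒢.mul_self_inv g

lemma rng_inv (g : G) : 𝒢.rng (𝒢.inv g) = 𝒢.src g := by
  apply 𝒢.rng_eq
  rw [𝒢.inv_inv]
  exact 𝒢.mul_inv_self g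

lemma src_unit {u : G} (hu : u ∈ 𝒢.unitSpace) : 𝒢.src u = u := by
  obtain ⟨g, rfl⟩ := hu
  have h1 : 𝒢.mul g (𝒢.src g) = some g := 𝒢.mul_src (𝒢.mul_inv_self g)
  exact (𝒢.src_of_mul h1).symm

lemma rng_unit {u : G} (hu : u ∈ 𝒢.unitSpace) : 𝒢.rng u = u := by
  obtain ⟨g, rfl⟩ := hu
  have h1 : 𝒢.mul (𝒢.src g) (𝒢.inv g) = some (𝒢.inv g) := 𝒢.mul_inv_cancel (𝒢.mul_inv_self g)
  have h2 := 𝒢.rng_of_mul h1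
  rw [← h2, 𝒢.rng_inv]

lemma rng_mem_unitSpace (g : G) : 𝒢.rng g ∈ 𝒢.unitSpace := ⟨𝒢.inv g, 𝒢.src_inv g⟩

lemma mul_rng_self (h : G) : 𝒢.mul (𝒢.rng h) h = some h := 𝒢.rng_mul (𝒢.mul_self_inv h)

lemma mul_src_self (h : G) : 𝒢.mul h (𝒢.src h) = some h := 𝒢.mul_src (𝒢.mul_inv_self h)

lemma unit_mul_eq {u h x : G} (hu : u ∈ 𝒢.unitSpace) (hx : 𝒢.mul u h = some x) : x = h := by
  have hc : 𝒢.src u = 𝒢.rng h := (𝒢.isSome_mul_iff u h).mp (by rw [hx]; rfl)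
  have hu' : u = 𝒢.rng h := (𝒢.src_unit hu).symm.trans hc
  have h2 := 𝒢.mul_rng_self h
  rw [← hu'] at h2
  exact Option.some_inj.mp (hx.symm.trans h2)

lemma mul_unit_eq {u h x : G} (hu : u ∈ 𝒢.unitSpace) (hx : 𝒢.mul h u = some x) : x = h := by
  have hc : 𝒢.src h = 𝒢.rng u := (𝒢.isSome_mul_iff h u).mp (by rw [hx]; rfl)
  have hu' : 𝒢.src h = u := hc.trans (𝒢.rng_unit hu)
  have h2 := 𝒢.mul_src_self h
  rw [hu'] at h2
  exact Option.some_inj.mp (hx.symm.trans h2)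

lemma eq_inv_of_mul_unit {g k u : G} (hu : u ∈ 𝒢.unitSpace) (hx : 𝒢.mul g k = some u) :
    k = 𝒢.inv g := by
  have h1 : 𝒢.mul (𝒢.inv g) u = some k := 𝒢.inv_mul_cancel hx
  have h2 : 𝒢.rng u = 𝒢.rng g := 𝒢.rng_of_mul hx
  have h3 : u = 𝒢.rng g := (𝒢.rng_unit hu).symm.trans h2
  have h4 : 𝒢.mul (𝒢.inv g) (𝒢.src (𝒢.inv g)) = some (𝒢.inv g) := 𝒢.mul_src_self _
  rw [𝒢.src_inv, ← h3] at h4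
  exact Option.some_inj.mp (h1.symm.trans h4)

lemma unitSpace_subset_iso : 𝒢.unitSpace ⊆ 𝒢.iso := fun u hu => by
  show 𝒢.src u = 𝒢.rng u
  rw [𝒢.src_unit hu, 𝒢.rng_unit hu]

lemma isBisection_mono {P Q : Set G} (h : 𝒢.IsBisection Q) (hPQ : P ⊆ Q) : 𝒢.IsBisection P :=
  fun g hg h' hh' => h g (hPQ hg) h' (hPQ hh')

lemma isBisection_of_subset_unitSpace {P : Set G} (h : P ⊆ 𝒢.unitSpace) : 𝒢.IsBisection P := by
  intro g hg h' hh' hor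
  rcases hor with h1 | h1
  · rw [← 𝒢.src_unit (h hg), h1, 𝒢.src_unit (h hh')]
  · rw [← 𝒢.rng_unit (h hg), h1, 𝒢.rng_unit (h hh')]

lemma isIsosection_of_isBisection {P : Set G} (h : 𝒢.IsBisection P) : 𝒢.IsIsosection P :=
  fun g hg h' hh' =>
    ⟨fun e => by rw [h g hg h' hh' (Or.inl e)], fun e => by rw [h g hg h' hh' (Or.inr e)]⟩

end Gpd

lemma mem_pdom {G Y : Type*} {a : G → Option Y} {x : G} : x ∈ pdom a ↔ (a x).isSome := Iff.rfl

namespace Gpd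

variable {G Y : Type*} (𝒢 : Gpd G) [Mul Y]

lemma convProd_some_elim {a b : G → Option Y} {x : G} (h : (𝒢.convProd a b x).isSome) :
    ∃ g k y z, a g = some y ∧ b k = some z ∧ 𝒢.mul g k = some x ∧
      𝒢.convProd a b x = some (y * z) := by
  by_cases hc : ∃ p : Y × Y, ∃ g k : G, a g = some p.1 ∧ b k = some p.2 ∧ 𝒢.mul g k = some x
  · obtain ⟨h1, h2, h3⟩ := hc.choose_spec.choose_spec.choose_spec
    refine ⟨hc.choose_spec.choose, hc.choose_spec.choose_spec.choose, hc.choose.1, hc.choose.2,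
      h1, h2, h3, ?_⟩
    unfold Gpd.convProd
    rw [dif_pos hc]
  · unfold Gpd.convProd at h
    rw [dif_neg hc] at h
    simp at h

lemma convProd_isSome_intro {a b : G → Option Y} {x g k : G} {y z : Y}
    (hy : a g = some y) (hz : b k = some z) (hx : 𝒢.mul g k = some x) :
    (𝒢.convProd a b x).isSome := by
  unfold Gpd.convProd
  rw [dif_pos ⟨(y, z), g, k, hy, hz, hx⟩]
  rfl

lemma convProd_eq_some {a b : G → Option Y} {x g k : G} {y z : Y}
    (hy : a g = some y) (hz : b k = some z) (hx : 𝒢.mul g k = some x)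
    (huniq : ∀ g' k' (y' z' : Y), a g' = some y' → b k' = some z' → 𝒢.mul g' k' = some x →
      g' = g ∧ k' = k) :
    𝒢.convProd a b x = some (y * z) := by
  obtain ⟨g', k', y', z', hy', hz', hx', heq⟩ :=
    𝒢.convProd_some_elim (𝒢.convProd_isSome_intro hy hz hx)
  obtain ⟨rfl, rfl⟩ := huniq g' k' y' z' hy' hz' hx'
  obtain rfl : y' = y := Option.some_inj.mp (hy'.symm.trans hy)
  obtain rfl : z' = z := Option.some_inj.mp (hz'.symm.trans hz)
  exact heq

lemma convProd_eq_none {a b : G → Option Y} {x : G}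
    (h : ∀ g k (y z : Y), a g = some y → b k = some z → 𝒢.mul g k = some x → False) :
    𝒢.convProd a b x = none := by
  unfold Gpd.convProd
  rw [dif_neg]
  rintro ⟨p, g, k, h1, h2, h3⟩
  exact h g k p.1 p.2 h1 h2 h3

end Gpd

namespace Gpd

variable {G : Type*} [TopologicalSpace G] (𝒢 : Gpd G)

lemma glue_two (hsrcC : Continuous 𝒢.src) (hinvC : Continuous 𝒢.inv)
    [T2Space 𝒢.unitSpace]
    {U V B : Set G} (hUo : IsOpen U) (hUb : 𝒢.IsBisection U)
    (hVo : IsOpen V) (hVb : 𝒢.IsBisection V)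
    (hBc : IsCompact B) (hBb : 𝒢.IsBisection B) (hBUV : B ⊆ U ∪ V) :
    ∃ O, IsOpen O ∧ 𝒢.IsBisection O ∧ B ⊆ O := by
  set σ : G → 𝒢.unitSpace := fun g => ⟨𝒢.src g, ⟨g, rfl⟩⟩ with hσdef
  have hσC : Continuous σ := hsrcC.subtype_mk _
  set ρ : G → 𝒢.unitSpace := fun g => σ (𝒢.inv g) with hρdef
  have hρC : Continuous ρ := hσC.comp hinvC
  have hρval : ∀ g, (ρ g : G) = 𝒢.rng g := fun g => 𝒢.src_inv g
  have hPc : IsCompact (B \ V) := hBc.diff hVo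
  have hQc : IsCompact (B \ U) := hBc.diff hUo
  have hdisjσ : Disjoint (σ '' (B \ V)) (σ '' (B \ U)) := by
    rw [Set.disjoint_left]
    rintro u ⟨x, hx, rfl⟩ ⟨y, hy, hxy⟩
    have hval : 𝒢.src y = 𝒢.src x := congrArg Subtype.val hxy
    have hyx : y = x := hBb y hy.1 x hx.1 (Or.inl hval)
    rw [hyx] at hy
    rcases hBUV hx.1 with h | h
    · exact hy.2 h
    · exact hx.2 h
  have hdisjρ : Disjoint (ρ '' (B \ V)) (ρ '' (B \ U)) := by
    rw [Set.disjoint_left]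
    rintro u ⟨x, hx, rfl⟩ ⟨y, hy, hxy⟩
    have hval : (ρ y : G) = (ρ x : G) := congrArg Subtype.val hxy
    rw [hρval, hρval] at hval
    have hyx : y = x := hBb y hy.1 x hx.1 (Or.inr hval)
    rw [hyx] at hy
    rcases hBUV hx.1 with h | h
    · exact hy.2 h
    · exact hx.2 h
  obtain ⟨Wp, Wq, hWpo, hWqo, hPW, hQW, hWdisj⟩ :=
    SeparatedNhds.of_isCompact_isCompact (hPc.image hσC) (hQc.image hσC) hdisjσ
  obtain ⟨Wp2, Wq2, hWp2o, hWq2o, hPW2, hQW2, hW2disj⟩ :=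
    SeparatedNhds.of_isCompact_isCompact (hPc.image hρC) (hQc.image hρC) hdisjρ
  refine ⟨(U ∩ σ ⁻¹' Wp ∩ ρ ⁻¹' Wp2 ∪ U ∩ V) ∪ (V ∩ σ ⁻¹' Wq ∩ ρ ⁻¹' Wq2 ∪ U ∩ V),
    ?_, ?_, ?_⟩
  · exact (((hUo.inter (hWpo.preimage hσC)).inter (hWp2o.preimage hρC)).union
      (hUo.inter hVo)).union
      (((hVo.inter (hWqo.preimage hσC)).inter (hWq2o.preimage hρC)).union (hUo.inter hVo))
  · have hcross : ∀ g h : G, g ∈ U → h ∈ V → σ g ∈ Wp → ρ g ∈ Wp2 → σ h ∈ Wq → ρ h ∈ Wq2 →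
        (𝒢.src g = 𝒢.src h ∨ 𝒢.rng g = 𝒢.rng h) → g = h := by
      intro g h hgU hhV hgs hgr hhs hhr hor
      exfalso
      rcases hor with he | he
      · have hσeq : σ g = σ h := Subtype.ext he
        rw [hσeq] at hgs
        exact Set.disjoint_left.mp hWdisj hgs hhs
      · have hρeq : ρ g = ρ h := Subtype.ext (by rw [hρval g, hρval h]; exact he)
        rw [hρeq] at hgr
        exact Set.disjoint_left.mp hW2disj hgr hhr
    rintro g hg h hh hor
    rcases hg with ((⟨⟨hg1, hg2⟩, hg3⟩ | ⟨hg1, hg2⟩) | (⟨⟨hg1, hg2⟩, hg3⟩ | ⟨hg1, hg2⟩)) <;>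
      rcases hh with ((⟨⟨hh1, hh2⟩, hh3⟩ | ⟨hh1, hh2⟩) | (⟨⟨hh1, hh2⟩, hh3⟩ | ⟨hh1, hh2⟩)) <;>
      first
        | exact hUb g hg1 h hh1 hor
        | exact hVb g hg1 h hh1 hor
        | exact hVb g hg2 h hh1 hor
        | exact hUb g hg1 h hh2 hor
        | exact hVb g hg2 h hh2 hor
        | exact hVb g hg1 h hh2 hor
        | exact hcross g h hg1 hh1 hg2 hg3 hh2 hh3 hor
        | exact (hcross h g hh1 hg1 hh2 hh3 hg2 hg3 (hor.imp Eq.symm Eq.symm)).symm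
  · intro x hx
    by_cases hxU : x ∈ U
    · by_cases hxV : x ∈ V
      · exact Or.inl (Or.inr ⟨hxU, hxV⟩)
      · exact Or.inl (Or.inl ⟨⟨hxU, hPW ⟨x, ⟨hx, hxV⟩, rfl⟩⟩, hPW2 ⟨x, ⟨hx, hxV⟩, rfl⟩⟩)
    · have hxV : x ∈ V := (hBUV hx).resolve_left hxU
      exact Or.inr (Or.inl ⟨⟨hxV, hQW ⟨x, ⟨hx, hxU⟩, rfl⟩⟩, hQW2 ⟨x, ⟨hx, hxU⟩, rfl⟩⟩)

lemma exists_open_bisection_of_compact (hsrcC : Continuous 𝒢.src) (hinvC : Continuous 𝒢.inv)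
    (hT2 : T2Space 𝒢.unitSpace)
    (hbasis : TopologicalSpace.IsTopologicalBasis
      {O : Set G | IsCompact O ∧ IsOpen O ∧ 𝒢.IsBisection O})
    {B : Set G} (hBc : IsCompact B) (hBb : 𝒢.IsBisection B) :
    ∃ O, IsOpen O ∧ 𝒢.IsBisection O ∧ B ⊆ O := by
  haveI := hT2
  have hcover : B ⊆ ⋃ i : {O : Set G // IsOpen O ∧ 𝒢.IsBisection O}, (i : Set G) := by
    intro x _
    obtain ⟨v, hv, hxv, -⟩ := hbasis.exists_subset_of_mem_open (Set.mem_univ x) isOpen_univ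
    exact Set.mem_iUnion.mpr ⟨⟨v, hv.2.1, hv.2.2⟩, hxv⟩
  obtain ⟨t, ht⟩ := hBc.elim_finite_subcover
    (fun i : {O : Set G // IsOpen O ∧ 𝒢.IsBisection O} => (i : Set G)) (fun i => i.2.1) hcover
  clear hcover
  suffices key : ∀ t : Finset {O : Set G // IsOpen O ∧ 𝒢.IsBisection O}, ∀ B : Set G,
      IsCompact B → 𝒢.IsBisection B → (B ⊆ ⋃ i ∈ t, (i : Set G)) →
      ∃ O, IsOpen O ∧ 𝒢.IsBisection O ∧ B ⊆ O by
    exact key t B hBc hBb ht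
  classical
  intro t
  induction t using Finset.induction_on with
  | empty =>
    intro B _ _ hB
    refine ⟨∅, isOpen_empty, fun g hg => (Set.notMem_empty g hg).elim, ?_⟩
    simpa using hB
  | @insert i s _ ih =>
    intro B hBc hBb hBsub
    rw [Finset.set_biUnion_insert] at hBsub
    have hB'sub : B \ (i : Set G) ⊆ ⋃ j ∈ s, (j : Set G) := fun x hx =>
      (hBsub hx.1).resolve_left hx.2
    obtain ⟨W, hWo, hWb, hBW⟩ := ih _ (hBc.diff i.2.1) (𝒢.isBisection_mono hBb Set.diff_subset)
      hB'sub
    refine 𝒢.glue_two hsrcC hinvC hWo hWb i.2.1 i.2.2 hBc hBb (fun x hx => ?_)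
    by_cases hxi : x ∈ (i : Set G)
    · exact Or.inr hxi
    · exact Or.inl (hBW ⟨hx, hxi⟩)

end Gpd
/-- if `G` is ample with Hausdorff unit space, `S` is
compact-Z-bumpy and `G` is effective, then `M` is exactly the set of elements
of `A` supported in a compact bisection. -/
theorem stmt19 {G Y : Type*} [TopologicalSpace G] [Monoid Y] (𝒢 : Gpd G)
    (hY : OneCancellative Y)
    (hAmple : 𝒢.Ample) (hT2 : T2Space 𝒢.unitSpace)
    (A : Set (G → Option Y))
    (m : (G → Option Y) → (G → Option Y) → (G → Option Y))
    (hclosed : ∀ a ∈ A, ∀ b ∈ A, m a b ∈ A)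
    (hassoc : ∀ a ∈ A, ∀ b ∈ A, ∀ c ∈ A, m (m a b) c = m a (m b c))
    (hagree : ∀ a b : G → Option Y,
      (𝒢.IsBisection (pdom a) ∨ 𝒢.IsBisection (pdom b)) → m a b = 𝒢.convProd a b)
    (hopen : ∀ a ∈ A, IsOpen (pdom a))
    (S C Z M : Set (G → Option Y))
    (hSdef : S = {a ∈ A | 𝒢.IsBisection (pdom a)})
    (hCdef : C = {a ∈ A | pdom a ⊆ 𝒢.iso})
    (hZdef : Z = {a ∈ A | pdom a ⊆ 𝒢.unitSpace ∧ ∀ g y, a g = some y → y ∈ Set.center Y})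
    (hMdef : M = {n ∈ A | 𝒢.IsIsosection (pdom n) ∧ ∃ s ∈ S, ∃ t ∈ S,
      m (m s t) n = n ∧ m n (m t s) = n ∧ m t n ∈ C ∧ m n t ∈ C ∧
      m s t ∈ Z ∧ m t s ∈ Z})
    (hCB : 𝒢.IsCompactBumpy S)
    (hZinv : ∀ a ∈ S, ∀ B ⊆ unitsPre a, IsCompact B → ∃ b ∈ S,
      m a b ∈ Z ∧ m b a ∈ Z ∧
      ∀ g ∈ B, ∃ y z, a g = some y ∧ b (𝒢.inv g) = some z ∧ y * z = 1 ∧ z * y = 1)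
    (heff : interior 𝒢.iso = 𝒢.unitSpace) :
    M = {a ∈ A | ∃ B : Set G, IsCompact B ∧ 𝒢.IsBisection B ∧ pdom a ⊆ B} := by
  obtain ⟨hinvC, -, hsrcLH⟩ := hAmple.1
  have hsrcC : Continuous 𝒢.src := hsrcLH.continuous
  have hsrcO : IsOpenMap 𝒢.src := hsrcLH.isOpenMap
  haveI : T2Space 𝒢.unitSpace := hT2
  have hSsubA : ∀ a ∈ S, a ∈ A := by
    intro a ha; rw [hSdef] at ha; exact ha.1
  have hSbis : ∀ a ∈ S, 𝒢.IsBisection (pdom a) := by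
    intro a ha; rw [hSdef] at ha; exact ha.2
  ext n
  simp only [Set.mem_setOf_eq]
  constructor
  · intro hn
    rw [hMdef] at hn
    obtain ⟨hnA, hniso, s, hsS, t, htS, h1, h2, h3, h4, h5, h6⟩ := hn
    have hsA := hSsubA s hsS
    have htA := hSsubA t htS
    have hsbis := hSbis s hsS
    have htbis := hSbis t htS
    rw [hCdef] at h3
    have htn_unit : pdom (m t n) ⊆ 𝒢.unitSpace := by
      rw [← heff]
      exact interior_maximal h3.2 (hopen _ h3.1)
    rw [hZdef] at h6
    have hassoc1 : m s (m t n) = n := by rw [← hassoc s hsA t htA n hnA, h1]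
    have hsub1 : pdom n ⊆ pdom s := by
      intro x hx
      have hx' : (𝒢.convProd s (m t n) x).isSome := by
        rw [← hagree s (m t n) (Or.inl hsbis), hassoc1]; exact hx
      obtain ⟨g, k, y, z, hy, hz, hm', -⟩ := 𝒢.convProd_some_elim hx'
      have hk : k ∈ 𝒢.unitSpace := htn_unit (by rw [mem_pdom, hz]; rfl)
      have hxg : x = g := 𝒢.mul_unit_eq hk hm'
      rw [mem_pdom, hxg, hy]; rfl
    have htsbis : 𝒢.IsBisection (pdom (m t s)) := 𝒢.isBisection_of_subset_unitSpace h6.2.1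
    have hsub2 : ∀ x ∈ pdom n, (m t s) (𝒢.src x) = some 1 := by
      intro x hx
      obtain ⟨w, hw⟩ := Option.isSome_iff_exists.mp hx
      have hx' : 𝒢.convProd n (m t s) x = some w := by
        rw [← hagree n (m t s) (Or.inr htsbis), h2]; exact hw
      obtain ⟨g, k, y, z, hy, hz, hm', heq⟩ := 𝒢.convProd_some_elim (by rw [hx']; rfl)
      have hk : k ∈ 𝒢.unitSpace := h6.2.1 (by rw [mem_pdom, hz]; rfl)
      have hxg : x = g := 𝒢.mul_unit_eq hk hm'
      have hks : k = 𝒢.src x := by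
        have hc := (𝒢.isSome_mul_iff g k).mp (by rw [hm']; rfl)
        rw [← hxg] at hc
        rw [← 𝒢.rng_unit hk, ← hc]
      have hyw : y = w := by
        rw [← hxg, hw] at hy
        exact (Option.some_inj.mp hy).symm
      have hzw : w * z = w := by
        rw [heq] at hx'
        have := Option.some_inj.mp hx'
        rw [hyw] at this
        exact this
      have hz1 : z = 1 := ((hY w z).1).mp hzw
      rw [← hks, hz, hz1]
    have hmtsS : m t s ∈ S := by
      rw [hagree t s (Or.inl htbis)]
      exact hCB.bumpy.mulClosed t htS s hsS
    have hKc : IsCompact (onePre (m t s)) := hCB.bumpy.oneProper _ hmtsS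
    have hsO : IsOpen (pdom s) := hopen s hsA
    have hfc : Continuous (fun p : pdom s => 𝒢.src p.val) :=
      hsrcC.comp continuous_subtype_val
    have hfinj : Function.Injective (fun p : pdom s => 𝒢.src p.val) := by
      rintro ⟨p, hp⟩ ⟨q, hq⟩ hpq
      exact Subtype.ext (hsbis p hp q hq (Or.inl hpq))
    have hfopen : IsOpenMap (fun p : pdom s => 𝒢.src p.val) :=
      hsrcO.comp hsO.isOpenMap_subtype_val
    have hfemb := Topology.IsOpenEmbedding.of_continuous_injective_isOpenMap hfc hfinj hfopen
    have hKrange : onePre (m t s) ⊆ Set.range (fun p : pdom s => 𝒢.src p.val) := by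
      intro u hu
      have hu2 : (m t s) u = some (1 : Y) := hu
      have hu' : (𝒢.convProd t s u).isSome := by
        rw [← hagree t s (Or.inl htbis), hu2]; rfl
      obtain ⟨k, g, y, z, hy, hz, hm', -⟩ := 𝒢.convProd_some_elim hu'
      have huU : u ∈ 𝒢.unitSpace := h6.2.1 (by rw [mem_pdom, hu2]; rfl)
      have hsg : 𝒢.src u = 𝒢.src g := 𝒢.src_of_mul hm'
      refine ⟨⟨g, by rw [mem_pdom, hz]; rfl⟩, ?_⟩
      show 𝒢.src g = u
      rw [← hsg, 𝒢.src_unit huU]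
    have hpre : IsCompact ((fun p : pdom s => 𝒢.src p.val) ⁻¹' onePre (m t s)) :=
      (hfemb.toIsEmbedding.toIsInducing.isCompact_preimage_iff hKrange).mpr hKc
    refine ⟨hnA, Subtype.val '' ((fun p : pdom s => 𝒢.src p.val) ⁻¹' onePre (m t s)),
      hpre.image continuous_subtype_val,
      𝒢.isBisection_mono hsbis (by rintro x ⟨⟨p, hp⟩, -, rfl⟩; exact hp), ?_⟩
    intro x hx
    exact ⟨⟨x, hsub1 hx⟩, hsub2 x hx, rfl⟩
  · rintro ⟨haA, B, hBc, hBb, haB⟩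
    obtain ⟨O, hOo, hOb, hBO⟩ :=
      𝒢.exists_open_bisection_of_compact hsrcC hinvC hT2 hAmple.2 hBc hBb
    obtain ⟨s, hsS, hsubO, hBs⟩ := hCB.compactUrysohn B O hBc hBb hOo hOb hBO
    obtain ⟨t, htS, hstZ, htsZ, hinv⟩ := hZinv s hsS B hBs hBc
    have hsA := hSsubA s hsS
    have htA := hSsubA t htS
    have hsbis := hSbis s hsS
    have htbis := hSbis t htS
    have habis : 𝒢.IsBisection (pdom n) := 𝒢.isBisection_mono hBb haB
    have hstU : pdom (m s t) ⊆ 𝒢.unitSpace := by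
      have h := hstZ; rw [hZdef] at h; exact h.2.1
    have htsU : pdom (m t s) ⊆ 𝒢.unitSpace := by
      have h := htsZ; rw [hZdef] at h; exact h.2.1
    have hsub_s : pdom n ⊆ pdom s := by
      intro x hx
      obtain ⟨y, hy, -⟩ := hBs (haB hx)
      rw [mem_pdom, hy]; rfl
    have hi : m (m s t) n = n := by
      rw [hagree (m s t) n (Or.inl (𝒢.isBisection_of_subset_unitSpace hstU))]
      funext x
      by_cases hx : (n x).isSome
      · obtain ⟨w, hw⟩ := Option.isSome_iff_exists.mp hx
        obtain ⟨y, z, hy, hz, hyz, hzy⟩ := hinv x (haB hx)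
        have hst1 : (m s t) (𝒢.rng x) = some 1 := by
          rw [hagree s t (Or.inl hsbis)]
          have huniq : ∀ g' k' (y' z' : Y), s g' = some y' → t k' = some z' →
              𝒢.mul g' k' = some (𝒢.rng x) → g' = x ∧ k' = 𝒢.inv x := by
            intro g' k' y' z' hy' hz' hm'
            have hrunit : 𝒢.rng x ∈ 𝒢.unitSpace := 𝒢.rng_mem_unitSpace x
            have hk' : k' = 𝒢.inv g' := 𝒢.eq_inv_of_mul_unit hrunit hm'
            have hr : 𝒢.rng (𝒢.rng x) = 𝒢.rng g' := 𝒢.rng_of_mul hm'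
            rw [𝒢.rng_unit hrunit] at hr
            have hg' : g' = x :=
              hsbis g' (by rw [mem_pdom, hy']; rfl) x (hsub_s hx) (Or.inr hr.symm)
            exact ⟨hg', by rw [hk', hg']⟩
          have hval := 𝒢.convProd_eq_some hy hz (𝒢.mul_self_inv x) huniq
          rw [hval, hyz]
        have houter := 𝒢.convProd_eq_some hst1 hw (𝒢.mul_rng_self x)
          (fun g' k' y' z' hy' hz' hm' => by
            have hg'U : g' ∈ 𝒢.unitSpace := hstU (by rw [mem_pdom, hy']; rfl)
            have hk' : x = k' := 𝒢.unit_mul_eq hg'U hm'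
            have hsg : 𝒢.src g' = 𝒢.rng k' := (𝒢.isSome_mul_iff g' k').mp (by rw [hm']; rfl)
            rw [𝒢.src_unit hg'U] at hsg
            exact ⟨by rw [hsg, ← hk'], hk'.symm⟩)
        rw [houter, hw, one_mul]
      · rw [Option.not_isSome_iff_eq_none] at hx
        rw [hx]
        apply 𝒢.convProd_eq_none
        intro g k y z hy hz hm'
        have hgU : g ∈ 𝒢.unitSpace := hstU (by rw [mem_pdom, hy]; rfl)
        have hxk : x = k := 𝒢.unit_mul_eq hgU hm'
        rw [← hxk, hx] at hz
        exact Option.some_ne_none z hz.symm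
    have hii : m n (m t s) = n := by
      rw [hagree n (m t s) (Or.inl habis)]
      funext x
      by_cases hx : (n x).isSome
      · obtain ⟨w, hw⟩ := Option.isSome_iff_exists.mp hx
        obtain ⟨y, z, hy, hz, hyz, hzy⟩ := hinv x (haB hx)
        have hts1 : (m t s) (𝒢.src x) = some 1 := by
          rw [hagree t s (Or.inl htbis)]
          have huniq : ∀ k' g' (z' y' : Y), t k' = some z' → s g' = some y' →
              𝒢.mul k' g' = some (𝒢.src x) → k' = 𝒢.inv x ∧ g' = x := by
            intro k' g' z' y' hz' hy' hm'
            have hsunit : 𝒢.src x ∈ 𝒢.unitSpace := ⟨x, rfl⟩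
            have hg'inv : g' = 𝒢.inv k' := 𝒢.eq_inv_of_mul_unit hsunit hm'
            have hs : 𝒢.src (𝒢.src x) = 𝒢.src g' := 𝒢.src_of_mul hm'
            rw [𝒢.src_unit hsunit] at hs
            have hg' : g' = x :=
              hsbis g' (by rw [mem_pdom, hy']; rfl) x (hsub_s hx) (Or.inl hs.symm)
            have hk' : k' = 𝒢.inv g' := by rw [hg'inv, 𝒢.inv_inv]
            exact ⟨by rw [hk', hg'], hg'⟩
          have hval := 𝒢.convProd_eq_some hz hy (𝒢.mul_inv_self x) huniq
          rw [hval, hzy]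
        have houter := 𝒢.convProd_eq_some hw hts1 (𝒢.mul_src_self x)
          (fun h' k' y' z' hy' hz' hm' => by
            have hk'U : k' ∈ 𝒢.unitSpace := htsU (by rw [mem_pdom, hz']; rfl)
            have hx' : x = h' := 𝒢.mul_unit_eq hk'U hm'
            have hsg : 𝒢.src h' = 𝒢.rng k' := (𝒢.isSome_mul_iff h' k').mp (by rw [hm']; rfl)
            rw [𝒢.rng_unit hk'U] at hsg
            exact ⟨hx'.symm, by rw [← hsg, ← hx']⟩)
        rw [houter, hw, mul_one]
      · rw [Option.not_isSome_iff_eq_none] at hx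
        rw [hx]
        apply 𝒢.convProd_eq_none
        intro g k y z hy hz hm'
        have hkU : k ∈ 𝒢.unitSpace := htsU (by rw [mem_pdom, hz]; rfl)
        have hxg : x = g := 𝒢.mul_unit_eq hkU hm'
        rw [← hxg, hx] at hy
        exact Option.some_ne_none y hy.symm
    have hiii : m t n ∈ C := by
      rw [hCdef]
      refine ⟨hclosed t htA n haA, ?_⟩
      intro x hx
      rw [mem_pdom, hagree t n (Or.inl htbis)] at hx
      obtain ⟨k, h', y, z, hy, hz, hm', -⟩ := 𝒢.convProd_some_elim hx
      obtain ⟨z', hz', -⟩ := hBs (haB (by rw [mem_pdom, hz]; rfl))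
      have hmem : x ∈ pdom (m t s) := by
        rw [mem_pdom, hagree t s (Or.inl htbis)]
        exact 𝒢.convProd_isSome_intro hy hz' hm'
      exact 𝒢.unitSpace_subset_iso (htsU hmem)
    have hiv : m n t ∈ C := by
      rw [hCdef]
      refine ⟨hclosed n haA t htA, ?_⟩
      intro x hx
      rw [mem_pdom, hagree n t (Or.inl habis)] at hx
      obtain ⟨h', k, y, z, hy, hz, hm', -⟩ := 𝒢.convProd_some_elim hx
      obtain ⟨y', hy', -⟩ := hBs (haB (by rw [mem_pdom, hy]; rfl))
      have hmem : x ∈ pdom (m s t) := by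
        rw [mem_pdom, hagree s t (Or.inl hsbis)]
        exact 𝒢.convProd_isSome_intro hy' hz hm'
      exact 𝒢.unitSpace_subset_iso (hstU hmem)
    rw [hMdef]
    exact ⟨haA, 𝒢.isIsosection_of_isBisection habis, s, hsS, t, htS, hi, hii, hiii, hiv,
      hstZ, htsZ⟩
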